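/- (Proposition 2, ratio form) Fix μ > 0, a = b = 7/2, and a positive integer K. Then lim_{T→∞} P_b(K, T+1) / P_b(K, T) = λ, where λ = μ/(μ + b) and the limit is over T ∈ ℕ tending to infinity. -/

import Mathlib

/-!
Writing `n = T + 1 + k`, one has `P_b(K, T) = ∑ₖ (k + 1) f(k + T)` with `f m = P_K(m + 1) / (m + 1)`.
From `Γ(s + 1) = s Γ(s)`, `P_K(n + 1) / P_K(n) = λ (n + Ka) / (n + 1) → λ`, hence also
`f(m + 1) / f(m) → λ`. If `c ≤ f(n + 1) / f(n) ≤ c'` for all `n ≥ T`, comparing the series for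
`P_b(K, T + 1)` and `P_b(K, T)` term by term gives `c ≤ P_b(K, T + 1) / P_b(K, T) ≤ c'`.
-/

open scoped BigOperators

/-- The distribution of the number of users in the coverage of a cluster of `K` RRUs:
`P_K(n) = b^{Ka} μ^n Γ(n + Ka) / ((μ + b)^{Ka+n} Γ(Ka) n!)` with `a = b = 7/2`. -/
noncomputable def Puser (μ : ℝ) (K : ℕ) (n : ℕ) : ℝ :=
  (7/2 : ℝ) ^ ((K : ℝ) * (7/2)) * μ ^ n * Real.Gamma ((n : ℝ) + (K : ℝ) * (7/2)) /
    ((μ + 7/2) ^ ((K : ℝ) * (7/2) + (n : ℝ)) * Real.Gamma ((K : ℝ) * (7/2)) *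
      (n.factorial : ℝ))

/-- The `n`-th summand of the user blocking probability: `((n − T)/n)·P_K(n)` for
`n ≥ T + 1`, and `0` otherwise. -/
noncomputable def blockTerm (μ : ℝ) (K T : ℕ) (n : ℕ) : ℝ :=
  if T + 1 ≤ n then (((n : ℝ) - (T : ℝ)) / (n : ℝ)) * Puser μ K n else 0

/-- The user blocking probability `P_b(K,T) = Σ_{n=T+1}^∞ ((n − T)/n)·P_K(n)`. -/
noncomputable def Pblock (μ : ℝ) (K T : ℕ) : ℝ := ∑' n : ℕ, blockTerm μ K T n

open Filter Topology

noncomputable def weightedTail (w f : ℕ → ℝ) (T : ℕ) : ℝ := ∑' k, w k * f (k + T)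

section WeightedTail

variable {w f : ℕ → ℝ}

lemma weightedTail_pos (hw : ∀ k, 0 < w k) (hf : ∀ n, 0 < f n) {T : ℕ}
    (hs : Summable fun k => w k * f (k + T)) : 0 < weightedTail w f T :=
  hs.tsum_pos (fun k => (mul_pos (hw k) (hf _)).le) 0 (mul_pos (hw 0) (hf _))

lemma mul_weightedTail_le_weightedTail_succ (hw : ∀ k, 0 ≤ w k)
    (hs : ∀ T, Summable fun k => w k * f (k + T)) {c : ℝ} {T : ℕ}
    (hc : ∀ n ≥ T, c * f n ≤ f (n + 1)) :
    c * weightedTail w f T ≤ weightedTail w f (T + 1) := by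
  rw [weightedTail, ← tsum_mul_left]
  refine ((hs T).mul_left c).tsum_le_tsum (fun k => ?_) (hs (T + 1))
  rw [mul_left_comm]
  exact mul_le_mul_of_nonneg_left (hc (k + T) (Nat.le_add_left T k)) (hw k)

lemma weightedTail_succ_le_mul_weightedTail (hw : ∀ k, 0 ≤ w k)
    (hs : ∀ T, Summable fun k => w k * f (k + T)) {c : ℝ} {T : ℕ}
    (hc : ∀ n ≥ T, f (n + 1) ≤ c * f n) :
    weightedTail w f (T + 1) ≤ c * weightedTail w f T := by
  rw [weightedTail, weightedTail, ← tsum_mul_left]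
  refine (hs (T + 1)).tsum_le_tsum (fun k => ?_) ((hs T).mul_left c)
  rw [mul_left_comm]
  exact mul_le_mul_of_nonneg_left (hc (k + T) (Nat.le_add_left T k)) (hw k)

theorem tendsto_weightedTail_succ_div (hw : ∀ k, 0 < w k) (hf : ∀ n, 0 < f n)
    (hs : ∀ T, Summable fun k => w k * f (k + T)) {l : ℝ}
    (hr : Tendsto (fun n => f (n + 1) / f n) atTop (𝓝 l)) :
    Tendsto (fun T => weightedTail w f (T + 1) / weightedTail w f T) atTop (𝓝 l) := by
  have hW T := weightedTail_pos hw hf (hs T)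
  rw [tendsto_order]
  constructor
  · intro a hal
    obtain ⟨c, hac, hcl⟩ := exists_between hal
    obtain ⟨N, hN⟩ := eventually_atTop.1 ((tendsto_order.1 hr).1 c hcl)
    filter_upwards [eventually_ge_atTop N] with T hT
    refine hac.trans_le ((le_div_iff₀ (hW T)).2 ?_)
    exact mul_weightedTail_le_weightedTail_succ (fun k => (hw k).le) hs fun n hn =>
      (le_div_iff₀ (hf n)).1 (hN n (hT.trans hn)).le
  · intro b hlb
    obtain ⟨c, hlc, hcb⟩ := exists_between hlb
    obtain ⟨N, hN⟩ := eventually_atTop.1 ((tendsto_order.1 hr).2 c hlc)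
    filter_upwards [eventually_ge_atTop N] with T hT
    refine ((div_le_iff₀ (hW T)).2 ?_).trans_lt hcb
    exact weightedTail_succ_le_mul_weightedTail (fun k => (hw k).le) hs fun n hn =>
      (div_le_iff₀ (hf n)).1 (hN n (hT.trans hn)).le

end WeightedTail

section Puser

variable {μ : ℝ} {K : ℕ}

lemma Puser_pos (hμ : 0 < μ) (hK : 0 < K) (n : ℕ) : 0 < Puser μ K n := by
  unfold Puser
  positivity

lemma Puser_succ (hμ : 0 < μ) (hK : 0 < K) (n : ℕ) :
    Puser μ K (n + 1) = μ / (μ + 7/2) * ((n + K * (7/2)) / (n + 1)) * Puser μ K n := by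
  have hc : (0 : ℝ) < n + K * (7/2) := by positivity
  unfold Puser
  rw [Nat.cast_succ, add_right_comm, Real.Gamma_add_one hc.ne', ← add_assoc,
    Real.rpow_add_one (by positivity), pow_succ, Nat.factorial_succ, Nat.cast_mul, Nat.cast_succ]
  field_simp

lemma tendsto_Puser_succ_div (hμ : 0 < μ) (hK : 0 < K) :
    Tendsto (fun n => Puser μ K (n + 1) / Puser μ K n) atTop (𝓝 (μ / (μ + 7/2))) := by
  have h := (tendsto_add_mul_div_add_mul_atTop_nhds ((K : ℝ) * (7/2)) 1 1 one_ne_zero).const_mul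
    (μ / (μ + 7/2))
  rw [div_one, mul_one] at h
  refine h.congr fun n => ?_
  rw [Puser_succ hμ hK, mul_div_cancel_right₀ _ (Puser_pos hμ hK n).ne']
  ring

lemma summable_Puser (hμ : 0 < μ) (hK : 0 < K) : Summable (Puser μ K) := by
  have hl : μ / (μ + 7/2) < 1 := (div_lt_one (by positivity)).2 (by linarith)
  refine summable_of_ratio_test_tendsto_lt_one hl
    (.of_forall fun n => (Puser_pos hμ hK n).ne') ((tendsto_Puser_succ_div hμ hK).congr fun n => ?_)
  rw [Real.norm_of_nonneg (Puser_pos hμ hK _).le, Real.norm_of_nonneg (Puser_pos hμ hK _).le]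

end Puser

noncomputable def scaledPuser (μ : ℝ) (K m : ℕ) : ℝ := Puser μ K (m + 1) / (m + 1)

lemma Pblock_eq_weightedTail (μ : ℝ) (K T : ℕ) :
    Pblock μ K T = weightedTail (fun k => k + 1) (scaledPuser μ K) T := by
  have hsupp : Function.support (blockTerm μ K T) ⊆ Set.range (· + (T + 1)) := by
    intro n hn
    have hTn : T + 1 ≤ n := by
      by_contra h
      exact hn (if_neg h)
    exact ⟨n - (T + 1), Nat.sub_add_cancel hTn⟩
  rw [Pblock, ← (add_left_injective (T + 1)).tsum_eq hsupp]
  refine tsum_congr fun k => ?_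
  rw [blockTerm, if_pos (Nat.le_add_left _ _), scaledPuser, ← add_assoc]
  push_cast
  ring

section ScaledPuser

variable {μ : ℝ} {K : ℕ}

lemma scaledPuser_pos (hμ : 0 < μ) (hK : 0 < K) (m : ℕ) : 0 < scaledPuser μ K m :=
  div_pos (Puser_pos hμ hK _) m.cast_add_one_pos

lemma summable_succ_mul_scaledPuser (hμ : 0 < μ) (hK : 0 < K) (T : ℕ) :
    Summable fun k : ℕ => ((k : ℝ) + 1) * scaledPuser μ K (k + T) := by
  refine .of_nonneg_of_le (fun k => by positivity [scaledPuser_pos hμ hK (k + T)]) (fun k => ?_)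
    ((summable_nat_add_iff (T + 1)).2 (summable_Puser hμ hK))
  rw [scaledPuser, mul_div_left_comm]
  refine mul_le_of_le_one_right (Puser_pos hμ hK _).le ((div_le_one (by positivity)).2 ?_)
  push_cast
  linarith [(Nat.cast_nonneg T : (0 : ℝ) ≤ T)]

lemma tendsto_scaledPuser_succ_div (hμ : 0 < μ) (hK : 0 < K) :
    Tendsto (fun m => scaledPuser μ K (m + 1) / scaledPuser μ K m) atTop
      (𝓝 (μ / (μ + 7/2))) := by
  have h := ((tendsto_Puser_succ_div hμ hK).comp (tendsto_add_atTop_nat 1)).mul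
    (tendsto_add_mul_div_add_mul_atTop_nhds (1 : ℝ) 2 1 one_ne_zero)
  rw [div_one, mul_one] at h
  refine h.congr fun m => ?_
  have hP := (Puser_pos hμ hK (m + 1)).ne'
  simp only [Function.comp_apply, scaledPuser]
  push_cast
  field_simp
  ring

end ScaledPuser

/-- Proposition 2, ratio form:
`lim_{T→∞} P_b(K,T+1)/P_b(K,T) = λ` with `λ = μ/(μ+b)`. -/
theorem Pblock_ratio_tendsto (μ : ℝ) (hμ : 0 < μ) (K : ℕ) (hK : 0 < K) :
    Filter.Tendsto (fun T : ℕ => Pblock μ K (T + 1) / Pblock μ K T)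
      Filter.atTop (nhds (μ / (μ + 7/2))) := by
  simp only [Pblock_eq_weightedTail]
  exact tendsto_weightedTail_succ_div (fun k => k.cast_add_one_pos) (scaledPuser_pos hμ hK)
    (summable_succ_mul_scaledPuser hμ hK) (tendsto_scaledPuser_succ_div hμ hK)
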